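/- Let A = A0 + A1ε ∈ DQ^{n×k} and B = B0 + B1ε ∈ DQ^{l×m} be dual quaternion matrices. Set A11 = A1·L_{A0}, A2 = R_{A0}·A11, A3 = R_{A0}, B2 = R_{B0}·B1, A4 = R_{A2}·R_{A0}, A5 = −A4·A1·A0†, A6 = R_{A4}·A5, B3 = B2·L_{B0}. Then a pair X = X0 + X1ε ∈ DQ^{k×m}, Y = Y0 + Y1ε ∈ DQ^{n×l} satisfies the dual quaternion matrix equation AX = YB if and only if there exist quaternion matrices W1, ..., W8 of appropriate sizes such that, with U1 = L_{A6}·W5 + W6·R_{B0}, U2 = L_{A4}·W7 + W8·R_{B3}, and W = A2†·A3·[Y0·B1 + Y1·B0 − A1·A0†·Y0·B0] + L_{A2}·W2, one has Y0 = L_{A3}·U1 + U2·R_{B0}, Y1 = A4†·(−A5·U1·B0 − A4·U2·B2)·B0† + L_{A4}·W3 + W4·R_{B0}, X0 = A0†·Y0·B0 + L_{A0}·W, and X1 = A0†·[Y0·B1 + Y1·B0 − A1·A0†·Y0·B0 − A11·W] + L_{A0}·W1; in particular the equation AX = YB is always solvable. -/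

import Mathlib

/-!
Splitting `A X = Y B` into standard and infinitesimal parts gives `A0 X0 = Y0 B0` and
`A0 X1 + A1 X0 = Y0 B1 + Y1 B0`. Every step then solves a linear equation `A Z B = C` in a
single unknown: it is solvable iff `R_A C = 0` and `C L_B = 0`, and its solutions are
`A† C B† + L_A U + V R_B`. Solving successively for `X0`, `X1` and the parameter `W` of `X0`
leaves two conditions on `Y`: `R_{A0} Y0 B0 = 0`, which parametrises `Y0` by `U1, U2`, and
`A4 (Y0 B1 + Y1 B0 - A1 A0† Y0 B0) = 0`, which then becomes the equation
`A4 Y1 B0 = -A5 U1 B0 - A4 U2 B2` for `Y1`. Its solvability conditions `A6 U1 B0 = 0` and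
`A4 U2 B3 = 0` are again of the same kind and parametrise `U1` and `U2`.
-/

open Matrix

/-- Quaternion matrices of size `p × q`. -/
abbrev QM (p q : ℕ) := Matrix (Fin p) (Fin q) (Quaternion ℝ)

/-- `Ad` is a Moore–Penrose inverse of the quaternion matrix `A`. -/
def IsMP {p q : ℕ} (A : QM p q) (Ad : QM q p) : Prop :=
  A * Ad * A = A ∧ Ad * A * Ad = Ad ∧ (A * Ad)ᴴ = A * Ad ∧ (Ad * A)ᴴ = Ad * A

/-- The dual quaternion matrix `A0 + A1 ε`, realized as a matrix over the
dual numbers (dual quaternions) `DualNumber (Quaternion ℝ)`. -/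
noncomputable def dm {p q : ℕ} (A0 A1 : QM p q) :
    Matrix (Fin p) (Fin q) (DualNumber (Quaternion ℝ)) :=
  A0.map TrivSqZeroExt.inl + A1.map TrivSqZeroExt.inr

/-- The rank of a quaternion matrix: the dimension (over `ℍ`) of the left
`ℍ`-submodule spanned by its rows. -/
noncomputable def qrank {m n : Type*} (A : Matrix m n (Quaternion ℝ)) : ℕ :=
  Module.finrank (Quaternion ℝ)
    (Submodule.span (Quaternion ℝ) (Set.range (fun i : m => fun j : n => A i j)))

namespace Matrix

variable {R : Type*} [Ring R] {m n o p : Type*}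

theorem one_sub_mul_eq_zero_iff [Fintype m] [DecidableEq m] {P : Matrix m m R}
    {C : Matrix m o R} : (1 - P) * C = 0 ↔ P * C = C := by
  rw [Matrix.sub_mul, Matrix.one_mul, sub_eq_zero, eq_comm]

theorem mul_one_sub_eq_zero_iff [Fintype o] [DecidableEq o] {P : Matrix o o R}
    {C : Matrix m o R} : C * (1 - P) = 0 ↔ C * P = C := by
  rw [Matrix.mul_sub, Matrix.mul_one, sub_eq_zero, eq_comm]

variable [Fintype m] [Fintype n] {A : Matrix m n R} {Ad : Matrix n m R}
  {B : Matrix o p R} {Bd : Matrix p o R}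

theorem one_sub_mul_mul_self [DecidableEq m] (hA : A * Ad * A = A) : (1 - A * Ad) * A = 0 :=
  one_sub_mul_eq_zero_iff.2 hA

theorem mul_one_sub_mul_self [DecidableEq n] (hA : A * Ad * A = A) : A * (1 - Ad * A) = 0 :=
  mul_one_sub_eq_zero_iff.2 (by rw [← Matrix.mul_assoc, hA])

theorem mul_eq_iff_of_mul_mul_self [DecidableEq m] [DecidableEq n] (hA : A * Ad * A = A)
    {X : Matrix n o R} {C : Matrix m o R} :
    A * X = C ↔ (1 - A * Ad) * C = 0 ∧ ∃ W : Matrix n o R, X = Ad * C + (1 - Ad * A) * W := by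
  constructor
  · rintro rfl
    refine ⟨by rw [← Matrix.mul_assoc, one_sub_mul_mul_self hA, Matrix.zero_mul], X, ?_⟩
    rw [Matrix.sub_mul, Matrix.one_mul, Matrix.mul_assoc]
    abel
  · rintro ⟨hC, W, rfl⟩
    rw [Matrix.mul_add, ← Matrix.mul_assoc, ← Matrix.mul_assoc, mul_one_sub_mul_self hA,
      Matrix.zero_mul, add_zero, one_sub_mul_eq_zero_iff.1 hC]

theorem mul_mul_eq_iff_of_mul_mul_self [Fintype o] [Fintype p] [DecidableEq m]
    [DecidableEq n] [DecidableEq o] [DecidableEq p] (hA : A * Ad * A = A) (hB : B * Bd * B = B)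
    {Y : Matrix n o R} {C : Matrix m p R} :
    A * Y * B = C ↔ (1 - A * Ad) * C = 0 ∧ C * (1 - Bd * B) = 0 ∧
      ∃ U V : Matrix n o R, Y = Ad * C * Bd + (1 - Ad * A) * U + V * (1 - B * Bd) := by
  constructor
  · rintro rfl
    refine ⟨?_, ?_, Y, Ad * A * Y, ?_⟩
    · rw [← Matrix.mul_assoc, ← Matrix.mul_assoc, one_sub_mul_mul_self hA, Matrix.zero_mul,
        Matrix.zero_mul]
    · rw [Matrix.mul_assoc, mul_one_sub_mul_self hB, Matrix.mul_zero]
    · simp only [Matrix.mul_sub, Matrix.sub_mul, Matrix.one_mul, Matrix.mul_one,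
        Matrix.mul_assoc]
      abel
  · rintro ⟨hAC, hCB, U, V, rfl⟩
    calc A * (Ad * C * Bd + (1 - Ad * A) * U + V * (1 - B * Bd)) * B
        = A * Ad * C * (Bd * B) + A * (1 - Ad * A) * U * B + A * V * ((1 - B * Bd) * B) := by
          simp only [Matrix.mul_add, Matrix.add_mul, Matrix.mul_assoc]
      _ = C := by
          rw [mul_one_sub_mul_self hA, one_sub_mul_mul_self hB, one_sub_mul_eq_zero_iff.1 hAC,
            mul_one_sub_eq_zero_iff.1 hCB, Matrix.zero_mul, Matrix.zero_mul, Matrix.mul_zero,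
            add_zero, add_zero]

theorem mul_mul_eq_zero_iff_of_mul_mul_self [Fintype o] [Fintype p] [DecidableEq m]
    [DecidableEq n] [DecidableEq o] [DecidableEq p] (hA : A * Ad * A = A) (hB : B * Bd * B = B)
    {Y : Matrix n o R} :
    A * Y * B = 0 ↔ ∃ U V : Matrix n o R, Y = (1 - Ad * A) * U + V * (1 - B * Bd) := by
  simp [mul_mul_eq_iff_of_mul_mul_self hA hB]

end Matrix

theorem dm_mul {p q r : ℕ} (A0 A1 : QM p q) (B0 B1 : QM q r) :
    dm A0 A1 * dm B0 B1 = dm (A0 * B0) (A0 * B1 + A1 * B0) := by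
  refine Matrix.ext fun i j => TrivSqZeroExt.ext ?_ ?_
  · simp [dm, Matrix.mul_apply, TrivSqZeroExt.fst_sum, TrivSqZeroExt.fst_mul]
  · simp [dm, Matrix.mul_apply, TrivSqZeroExt.snd_sum, TrivSqZeroExt.snd_mul,
      Finset.sum_add_distrib, smul_eq_mul, MulOpposite.smul_eq_mul_unop]

theorem dm_inj {p q : ℕ} {A0 A1 B0 B1 : QM p q} :
    dm A0 A1 = dm B0 B1 ↔ A0 = B0 ∧ A1 = B1 := by
  refine ⟨fun h => ⟨Matrix.ext fun i j => ?_, Matrix.ext fun i j => ?_⟩,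
    fun h => h.1 ▸ h.2 ▸ rfl⟩
  · simpa [dm] using congrArg (fun M => (M i j).fst) h
  · simpa [dm] using congrArg (fun M => (M i j).snd) h

theorem IsMP.mul_one_sub_of_mul_conjTranspose_eq_zero {p q r : ℕ} {A : QM p q} {Ad : QM q p}
    (hA : IsMP A Ad) {M : QM r q} (hM : M * Aᴴ = 0) : M * (1 - Ad * A) = M := by
  rw [Matrix.mul_sub, Matrix.mul_one, ← hA.2.2.2, Matrix.conjTranspose_mul, ← Matrix.mul_assoc,
    hM, Matrix.zero_mul, sub_zero]

theorem dm_mul_eq_dm_iff {n k m : ℕ} {A0 A1 : QM n k} {A0d : QM k n} (hA0d : A0 * A0d * A0 = A0)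
    {A11 : QM n k} (hA11 : A11 = A1 * (1 - A0d * A0))
    {A2 : QM n k} (hA2 : A2 = (1 - A0 * A0d) * A11) {A2d : QM k n} (hA2d : A2 * A2d * A2 = A2)
    {A3 : QM n n} (hA3 : A3 = 1 - A0 * A0d)
    {A4 : QM n n} (hA4 : A4 = (1 - A2 * A2d) * (1 - A0 * A0d))
    (X0 X1 : QM k m) (C0 C1 : QM n m) :
    dm A0 A1 * dm X0 X1 = dm C0 C1 ↔
      A3 * C0 = 0 ∧ A4 * (C1 - A1 * A0d * C0) = 0 ∧
      ∃ W1 W2 W : QM k m,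
        W = A2d * A3 * (C1 - A1 * A0d * C0) + (1 - A2d * A2) * W2 ∧
        X0 = A0d * C0 + (1 - A0d * A0) * W ∧
        X1 = A0d * (C1 - A1 * A0d * C0 - A11 * W) + (1 - A0d * A0) * W1 := by
  subst hA3 hA4
  set S := C1 - A1 * A0d * C0 with hS
  have hA1X0 : ∀ W : QM k m,
      X0 = A0d * C0 + (1 - A0d * A0) * W → A1 * X0 = A1 * A0d * C0 + A11 * W := by
    rintro W rfl
    rw [hA11, Matrix.mul_add, Matrix.mul_assoc, Matrix.mul_assoc]
  have hA2W : ∀ W : QM k m,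
      (1 - A0 * A0d) * (S - A11 * W) = 0 ↔ A2 * W = (1 - A0 * A0d) * S := by
    intro W
    rw [Matrix.mul_sub, hA2, sub_eq_zero, Matrix.mul_assoc, eq_comm]
  rw [dm_mul, dm_inj, mul_eq_iff_of_mul_mul_self hA0d]
  constructor
  · rintro ⟨⟨hC0, W, hX0⟩, h1⟩
    have hX1 : A0 * X1 = S - A11 * W := by
      rw [hS, ← h1, hA1X0 W hX0]
      abel
    obtain ⟨hS, W1, hX1⟩ := (mul_eq_iff_of_mul_mul_self hA0d).1 hX1
    obtain ⟨hRS, W2, hW⟩ := (mul_eq_iff_of_mul_mul_self hA2d).1 ((hA2W W).1 hS)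
    refine ⟨hC0, by rwa [Matrix.mul_assoc], W1, W2, W, by rwa [Matrix.mul_assoc], hX0, hX1⟩
  · rintro ⟨hC0, hRS, W1, W2, W, hW, hX0, hX1⟩
    have hAW : A2 * W = (1 - A0 * A0d) * S := (mul_eq_iff_of_mul_mul_self hA2d).2
      ⟨by rwa [← Matrix.mul_assoc], W2, by rwa [← Matrix.mul_assoc]⟩
    have hA0X1 : A0 * X1 = S - A11 * W :=
      (mul_eq_iff_of_mul_mul_self hA0d).2 ⟨(hA2W W).2 hAW, W1, hX1⟩
    refine ⟨⟨hC0, W, hX0⟩, ?_⟩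
    rw [hA0X1, hA1X0 W hX0, hS]
    abel

theorem A4_mul_Y1_mul_B0_eq_iff {n l m : ℕ} {B0 : QM l m} {B0d : QM m l}
    (hB0d : B0 * B0d * B0 = B0)
    {B2 B3 : QM l m} (hB3 : B3 = B2 * (1 - B0d * B0))
    {A4 A4d A5 A6 : QM n n} (hA4d : A4 * A4d * A4 = A4) (hA6 : A6 = (1 - A4 * A4d) * A5)
    {Y1 U1 U2 : QM n l} :
    A4 * Y1 * B0 = -(A5 * U1 * B0) - A4 * U2 * B2 ↔
      A6 * U1 * B0 = 0 ∧ A4 * U2 * B3 = 0 ∧ ∃ W3 W4 : QM n l,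
        Y1 = A4d * (-(A5 * U1 * B0) - A4 * U2 * B2) * B0d + (1 - A4d * A4) * W3 +
          W4 * (1 - B0 * B0d) := by
  have hR : (1 - A4 * A4d) * (-(A5 * U1 * B0) - A4 * U2 * B2) = -(A6 * U1 * B0) := by
    rw [Matrix.mul_sub, Matrix.mul_neg, hA6, ← Matrix.mul_assoc, ← Matrix.mul_assoc,
      ← Matrix.mul_assoc, ← Matrix.mul_assoc, one_sub_mul_mul_self hA4d, Matrix.zero_mul,
      Matrix.zero_mul, sub_zero]
  have hL : (-(A5 * U1 * B0) - A4 * U2 * B2) * (1 - B0d * B0) = -(A4 * U2 * B3) := by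
    rw [Matrix.sub_mul, Matrix.neg_mul, Matrix.mul_assoc, mul_one_sub_mul_self hB0d,
      Matrix.mul_zero, neg_zero, zero_sub, hB3, Matrix.mul_assoc]
  rw [mul_mul_eq_iff_of_mul_mul_self hA4d hB0d, hR, hL, neg_eq_zero, neg_eq_zero]

theorem A4_mul_rhs_eq_zero_iff {n k l m : ℕ} {A0 A1 : QM n k} {B0 B1 : QM l m} {A0d : QM k n}
    (hA0d : IsMP A0 A0d) {B0d : QM m l} (hB0d : B0 * B0d * B0 = B0)
    {A2 : QM n k} {A2d : QM k n} {A3 A3d : QM n n} (hA3 : A3 = 1 - A0 * A0d) (hA3d : IsMP A3 A3d)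
    {B2 : QM l m} (hB2 : B2 = (1 - B0 * B0d) * B1)
    {A4 : QM n n} (hA4 : A4 = (1 - A2 * A2d) * (1 - A0 * A0d))
    {A5 : QM n n} (hA5 : A5 = -(A4 * A1 * A0d))
    {Y0 Y1 U1 U2 : QM n l} (hY0 : Y0 = (1 - A3d * A3) * U1 + U2 * (1 - B0 * B0d)) :
    A4 * (Y0 * B1 + Y1 * B0 - A1 * A0d * (Y0 * B0)) = 0 ↔
      A4 * Y1 * B0 = -(A5 * U1 * B0) - A4 * U2 * B2 := by
  have hA4L : A4 * (1 - A3d * A3) = 0 := by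
    rw [hA4, ← hA3, Matrix.mul_assoc, mul_one_sub_mul_self hA3d.1, Matrix.mul_zero]
  have hA5L : A5 * (1 - A3d * A3) = A5 := by
    refine hA3d.mul_one_sub_of_mul_conjTranspose_eq_zero ?_
    rw [hA3, Matrix.conjTranspose_sub, Matrix.conjTranspose_one, hA0d.2.2.1, hA5, Matrix.neg_mul,
      Matrix.mul_assoc, mul_one_sub_mul_self hA0d.2.1, Matrix.mul_zero, neg_zero]
  have hA4Y0 : A4 * Y0 = A4 * U2 * (1 - B0 * B0d) := by
    rw [hY0, Matrix.mul_add, ← Matrix.mul_assoc, hA4L, Matrix.zero_mul, zero_add,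
      Matrix.mul_assoc]
  have hA5Y0 : A5 * Y0 * B0 = A5 * U1 * B0 := by
    rw [hY0, Matrix.mul_add, Matrix.add_mul, ← Matrix.mul_assoc, hA5L,
      Matrix.mul_assoc A5 (U2 * _) B0, Matrix.mul_assoc U2, one_sub_mul_mul_self hB0d,
      Matrix.mul_zero, Matrix.mul_zero, add_zero]
  calc A4 * (Y0 * B1 + Y1 * B0 - A1 * A0d * (Y0 * B0)) = 0
      ↔ A4 * Y0 * B1 + A4 * Y1 * B0 + A5 * Y0 * B0 = 0 := by
        rw [hA5]
        simp only [Matrix.mul_add, Matrix.mul_neg, Matrix.neg_mul, Matrix.mul_assoc,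
          sub_eq_add_neg]
    _ ↔ A4 * Y1 * B0 - (-(A5 * U1 * B0) - A4 * U2 * B2) = 0 := by
        rw [hA4Y0, hA5Y0, hB2, Matrix.mul_assoc (A4 * U2)]
        abel_nf
    _ ↔ A4 * Y1 * B0 = -(A5 * U1 * B0) - A4 * U2 * B2 := sub_eq_zero

theorem solvability_conditions_iff {n k l m : ℕ} {A0 A1 : QM n k} {B0 B1 : QM l m} {A0d : QM k n}
    (hA0d : IsMP A0 A0d) {B0d : QM m l} (hB0d : B0 * B0d * B0 = B0)
    {A2 : QM n k} {A2d : QM k n} {A3 A3d : QM n n} (hA3 : A3 = 1 - A0 * A0d) (hA3d : IsMP A3 A3d)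
    {B2 : QM l m} (hB2 : B2 = (1 - B0 * B0d) * B1)
    {A4 A4d : QM n n} (hA4 : A4 = (1 - A2 * A2d) * (1 - A0 * A0d)) (hA4d : A4 * A4d * A4 = A4)
    {A5 : QM n n} (hA5 : A5 = -(A4 * A1 * A0d))
    {A6 A6d : QM n n} (hA6 : A6 = (1 - A4 * A4d) * A5) (hA6d : A6 * A6d * A6 = A6)
    {B3 : QM l m} (hB3 : B3 = B2 * (1 - B0d * B0)) {B3d : QM m l} (hB3d : B3 * B3d * B3 = B3)
    (Y0 Y1 : QM n l) :
    A3 * (Y0 * B0) = 0 ∧ A4 * (Y0 * B1 + Y1 * B0 - A1 * A0d * (Y0 * B0)) = 0 ↔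
      ∃ W3 W4 W5 W6 W7 W8 U1 U2 : QM n l,
        U1 = (1 - A6d * A6) * W5 + W6 * (1 - B0 * B0d) ∧
        U2 = (1 - A4d * A4) * W7 + W8 * (1 - B3 * B3d) ∧
        Y0 = (1 - A3d * A3) * U1 + U2 * (1 - B0 * B0d) ∧
        Y1 = A4d * (-(A5 * U1 * B0) - A4 * U2 * B2) * B0d + (1 - A4d * A4) * W3 +
          W4 * (1 - B0 * B0d) := by
  rw [← Matrix.mul_assoc, mul_mul_eq_zero_iff_of_mul_mul_self hA3d.1 hB0d]
  constructor
  · rintro ⟨⟨U1, U2, hY0⟩, hS⟩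
    rw [A4_mul_rhs_eq_zero_iff hA0d hB0d hA3 hA3d hB2 hA4 hA5 hY0,
      A4_mul_Y1_mul_B0_eq_iff hB0d hB3 hA4d hA6, mul_mul_eq_zero_iff_of_mul_mul_self hA6d hB0d,
      mul_mul_eq_zero_iff_of_mul_mul_self hA4d hB3d] at hS
    obtain ⟨⟨W5, W6, hU1⟩, ⟨W7, W8, hU2⟩, W3, W4, hY1⟩ := hS
    exact ⟨W3, W4, W5, W6, W7, W8, U1, U2, hU1, hU2, hY0, hY1⟩
  · rintro ⟨W3, W4, W5, W6, W7, W8, U1, U2, hU1, hU2, hY0, hY1⟩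
    refine ⟨⟨U1, U2, hY0⟩, ?_⟩
    rw [A4_mul_rhs_eq_zero_iff hA0d hB0d hA3 hA3d hB2 hA4 hA5 hY0,
      A4_mul_Y1_mul_B0_eq_iff hB0d hB3 hA4d hA6, mul_mul_eq_zero_iff_of_mul_mul_self hA6d hB0d,
      mul_mul_eq_zero_iff_of_mul_mul_self hA4d hB3d]
    exact ⟨⟨W5, W6, hU1⟩, ⟨W7, W8, hU2⟩, W3, W4, hY1⟩

/-- the dual quaternion matrix equation `A X = Y B`: a pair
`(X, Y)` is a solution iff it has the displayed form; in particular the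
equation is always solvable. -/
theorem stmt17 {n k l m : ℕ}
    (A0 A1 : QM n k) (B0 B1 : QM l m)
    (A0d : QM k n) (hA0d : IsMP A0 A0d)
    (B0d : QM m l) (hB0d : IsMP B0 B0d)
    (A11 : QM n k) (hA11 : A11 = A1 * (1 - A0d * A0))
    (A2 : QM n k) (hA2 : A2 = (1 - A0 * A0d) * A11)
    (A2d : QM k n) (hA2d : IsMP A2 A2d)
    (A3 : QM n n) (hA3 : A3 = 1 - A0 * A0d)
    (A3d : QM n n) (hA3d : IsMP A3 A3d)
    (B2 : QM l m) (hB2 : B2 = (1 - B0 * B0d) * B1)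
    (A4 : QM n n) (hA4 : A4 = (1 - A2 * A2d) * (1 - A0 * A0d))
    (A4d : QM n n) (hA4d : IsMP A4 A4d)
    (A5 : QM n n) (hA5 : A5 = -(A4 * A1 * A0d))
    (A6 : QM n n) (hA6 : A6 = (1 - A4 * A4d) * A5)
    (A6d : QM n n) (hA6d : IsMP A6 A6d)
    (B3 : QM l m) (hB3 : B3 = B2 * (1 - B0d * B0))
    (B3d : QM m l) (hB3d : IsMP B3 B3d) :
    (∀ (X0 X1 : QM k m) (Y0 Y1 : QM n l),
      dm A0 A1 * dm X0 X1 = dm Y0 Y1 * dm B0 B1 ↔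
        ∃ (W1 W2 : QM k m) (W3 W4 W5 W6 W7 W8 : QM n l)
          (U1 U2 : QM n l) (W : QM k m),
          U1 = (1 - A6d * A6) * W5 + W6 * (1 - B0 * B0d) ∧
          U2 = (1 - A4d * A4) * W7 + W8 * (1 - B3 * B3d) ∧
          W = A2d * A3 * (Y0 * B1 + Y1 * B0 - A1 * A0d * (Y0 * B0))
                + (1 - A2d * A2) * W2 ∧
          Y0 = (1 - A3d * A3) * U1 + U2 * (1 - B0 * B0d) ∧
          Y1 = A4d * (-(A5 * U1 * B0) - A4 * U2 * B2) * B0d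
                + (1 - A4d * A4) * W3 + W4 * (1 - B0 * B0d) ∧
          X0 = A0d * (Y0 * B0) + (1 - A0d * A0) * W ∧
          X1 = A0d * (Y0 * B1 + Y1 * B0 - A1 * A0d * (Y0 * B0) - A11 * W)
                + (1 - A0d * A0) * W1) ∧
    (∃ (X : Matrix (Fin k) (Fin m) (DualNumber (Quaternion ℝ)))
       (Y : Matrix (Fin n) (Fin l) (DualNumber (Quaternion ℝ))),
        dm A0 A1 * X = Y * dm B0 B1) := by
  refine ⟨fun X0 X1 Y0 Y1 => ?_, 0, 0, by rw [Matrix.mul_zero, Matrix.zero_mul]⟩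
  rw [dm_mul Y0 Y1 B0 B1, dm_mul_eq_dm_iff hA0d.1 hA11 hA2 hA2d.1 hA3 hA4, ← and_assoc,
    solvability_conditions_iff hA0d hB0d.1 hA3 hA3d hB2 hA4 hA4d.1 hA5 hA6 hA6d.1 hB3 hB3d.1]
  constructor
  · rintro ⟨⟨W3, W4, W5, W6, W7, W8, U1, U2, hU1, hU2, hY0, hY1⟩, W1, W2, W, hW, hX0, hX1⟩
    exact ⟨W1, W2, W3, W4, W5, W6, W7, W8, U1, U2, W, hU1, hU2, hW, hY0, hY1, hX0, hX1⟩
  · rintro ⟨W1, W2, W3, W4, W5, W6, W7, W8, U1, U2, W, hU1, hU2, hW, hY0, hY1, hX0, hX1⟩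
    exact ⟨⟨W3, W4, W5, W6, W7, W8, U1, U2, hU1, hU2, hY0, hY1⟩, W1, W2, W, hW, hX0, hX1⟩
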